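/- arXiv:2112.06900 — 3 statements merged into one kernel-verified Lean document; each statement's English description precedes it below -/
import Mathlib

section
/- For every θ ∈ [0, π/2], the auxiliary function g(C, θ) = sin²θ·|1 − 2C| + sin(2θ)·√C·√(1 − C) attains the value sin θ at C = (1 + sin θ)/2, i.e., g((1 + sin θ)/2, θ) = sin θ; hence the maximum of g(·, θ) over C ∈ [0, 1] equals sin θ. -/
/-!
Write `s = sin θ`, `c = cos θ` and `u = 1 - 2C`. Since `sin 2θ = 2sc` and `4C(1 - C) = 1 - u²`,
`g(C, θ) = s (s |u| + c √(1 - u²))`. For `|u| ≤ 1` both `(s, c)` and `(|u|, √(1 - u²))` are unit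
vectors, so by Cauchy–Schwarz the bracket is at most `1`, with equality when the vectors agree,
i.e. `|u| = s`, which is `C = (1 + s)/2`.
-/

open Real

/-- The auxiliary function `g(C, θ) = sin²θ |1 - 2C| + sin(2θ) √C √(1 - C)`. -/
noncomputable def gAux (C θ : ℝ) : ℝ :=
  Real.sin θ ^ 2 * |1 - 2 * C| + Real.sin (2 * θ) * Real.sqrt C * Real.sqrt (1 - C)

lemma mul_add_mul_le_one_of_sq_add_sq_eq_one {p q x y : ℝ} (hpq : p ^ 2 + q ^ 2 = 1)
    (hxy : x ^ 2 + y ^ 2 = 1) : p * x + q * y ≤ 1 := by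
  nlinarith [sq_nonneg (p - x), sq_nonneg (q - y)]

lemma two_mul_sqrt_mul_sqrt_one_sub (C : ℝ) :
    2 * √C * √(1 - C) = √(1 - (1 - 2 * C) ^ 2) := by
  have h : 1 - (1 - 2 * C) ^ 2 = 2 ^ 2 * C * (1 - C) := by ring
  rcases le_or_gt 0 C with hC | hC
  · rw [h, sqrt_mul (by positivity), sqrt_mul (by positivity), sqrt_sq zero_le_two]
  · have hneg : 2 ^ 2 * C * (1 - C) ≤ 0 := by nlinarith
    rw [sqrt_eq_zero'.2 hC.le, h, sqrt_eq_zero'.2 hneg, mul_zero, zero_mul]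

lemma gAux_eq (C θ : ℝ) :
    gAux C θ = sin θ * (sin θ * |1 - 2 * C| + cos θ * √(1 - (1 - 2 * C) ^ 2)) := by
  rw [gAux, sin_two_mul, ← two_mul_sqrt_mul_sqrt_one_sub]
  ring

lemma gAux_le_sin {C θ : ℝ} (hC : C ∈ Set.Icc (0 : ℝ) 1) (hθ : 0 ≤ sin θ) :
    gAux C θ ≤ sin θ := by
  have hu : |1 - 2 * C| ^ 2 + √(1 - (1 - 2 * C) ^ 2) ^ 2 = 1 := by
    rw [sq_abs, sq_sqrt (by nlinarith [hC.1, hC.2])]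
    ring
  rw [gAux_eq]
  calc sin θ * (sin θ * |1 - 2 * C| + cos θ * √(1 - (1 - 2 * C) ^ 2)) ≤ sin θ * 1 := by
        gcongr
        exact mul_add_mul_le_one_of_sq_add_sq_eq_one (sin_sq_add_cos_sq θ) hu
    _ = sin θ := mul_one _

lemma gAux_one_add_sin_div_two {θ : ℝ} (hs : 0 ≤ sin θ) (hc : 0 ≤ cos θ) :
    gAux ((1 + sin θ) / 2) θ = sin θ := by
  have hu : 1 - 2 * ((1 + sin θ) / 2) = -sin θ := by ring
  rw [gAux_eq, hu, abs_neg, abs_of_nonneg hs, neg_sq, ← abs_cos_eq_sqrt_one_sub_sin_sq,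
    abs_of_nonneg hc, ← sq, ← sq, sin_sq_add_cos_sq, mul_one]

/-- For every `θ ∈ [0, π/2]`, the auxiliary function
`g(·, θ)` attains the value `sin θ` at `C = (1 + sin θ)/2`, and `sin θ` is the
maximum of `g(·, θ)` over `C ∈ [0, 1]`. -/
theorem g_attains_max
    (θ : ℝ) (hθ : θ ∈ Set.Icc 0 (π / 2)) :
    gAux ((1 + Real.sin θ) / 2) θ = Real.sin θ ∧
      IsGreatest ((fun C => gAux C θ) '' Set.Icc (0 : ℝ) 1) (Real.sin θ) := by
  have hs : 0 ≤ sin θ := sin_nonneg_of_nonneg_of_le_pi hθ.1 (hθ.2.trans (by linarith [pi_pos]))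
  have hc : 0 ≤ cos θ := cos_nonneg_of_mem_Icc ⟨by linarith [pi_pos, hθ.1], hθ.2⟩
  have hval := gAux_one_add_sin_div_two hs hc
  refine ⟨hval, ⟨_, ⟨by linarith, by linarith [sin_le_one θ]⟩, hval⟩, ?_⟩
  rintro _ ⟨C, hC, rfl⟩
  exact gAux_le_sin hC hs
end

section
/- Let Φ₀, Ψ, Φ be unit vectors in a complex inner product space E, set C = |⟨Φ₀, Φ⟩|², and let R ≥ 0 be a real number with arccos|⟨Φ₀, Ψ⟩| ≤ R. Then | |⟨Φ, Ψ⟩|² − C | ≤ sin²(min(R, π/2))·|1 − 2C| + sin(2·min(R, π/4))·√C·√(1 − C). -/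
/-!
The Bures angle `arccos |⟨x, y⟩|` of unit vectors satisfies the triangle inequality: multiplying
`y` and `z` by suitable phases makes `⟨x, y⟩` and `⟨y, z⟩` real and nonnegative, which reduces it
to the triangle inequality for the real angle of `E` viewed as a real inner product space.
Hence the Bures angles `α` of `(Φ₀, Φ)` and `γ` of `(Ψ, Φ)` satisfy `|γ - α| ≤ R`, and with
`γ = α + δ` the claim follows from
`cos² (α + δ) - cos² α = sin² δ (1 - 2 cos² α) - sin 2δ cos α sin α`,
bounding `sin² δ` and `|sin 2δ|` by monotonicity of `sin` on `[0, π/2]`.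
-/
open scoped InnerProductSpace
open Real

section BuresAngle

variable {E : Type*} [NormedAddCommGroup E] [InnerProductSpace ℂ E]

noncomputable def buresAngle (x y : E) : ℝ := arccos ‖⟪x, y⟫_ℂ‖

lemma buresAngle_comm (x y : E) : buresAngle x y = buresAngle y x := by
  rw [buresAngle, buresAngle, norm_inner_symm]

lemma buresAngle_smul_left {c : ℂ} (hc : ‖c‖ = 1) (x y : E) :
    buresAngle (c • x) y = buresAngle x y := by
  rw [buresAngle, buresAngle, inner_smul_left, norm_mul, Complex.norm_conj, hc, one_mul]

lemma buresAngle_smul_right {c : ℂ} (hc : ‖c‖ = 1) (x y : E) :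
    buresAngle x (c • y) = buresAngle x y := by
  rw [buresAngle, buresAngle, inner_smul_right, norm_mul, hc, one_mul]

lemma buresAngle_nonneg (x y : E) : 0 ≤ buresAngle x y := arccos_nonneg _

lemma buresAngle_le_pi_div_two (x y : E) : buresAngle x y ≤ π / 2 :=
  arccos_le_pi_div_two.2 (norm_nonneg _)

lemma cos_buresAngle {x y : E} (hx : ‖x‖ = 1) (hy : ‖y‖ = 1) :
    cos (buresAngle x y) = ‖⟪x, y⟫_ℂ‖ := by
  have : ‖⟪x, y⟫_ℂ‖ ≤ 1 := by simpa [hx, hy] using norm_inner_le_norm (𝕜 := ℂ) x y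
  exact cos_arccos (by linarith [norm_nonneg ⟪x, y⟫_ℂ]) this

lemma sin_buresAngle (x y : E) : sin (buresAngle x y) = √(1 - ‖⟪x, y⟫_ℂ‖ ^ 2) := sin_arccos _

section RealAngle

attribute [local instance] InnerProductSpace.complexToReal

open InnerProductGeometry

lemma buresAngle_le_angle {x y : E} (hx : ‖x‖ = 1) (hy : ‖y‖ = 1) :
    buresAngle x y ≤ angle x y := by
  rw [angle, hx, hy, mul_one, div_one, real_inner_eq_re_inner ℂ]
  exact antitone_arccos (Complex.re_le_norm _)

lemma exists_angle_smul_right_eq_buresAngle {x y : E} (hx : ‖x‖ = 1) (hy : ‖y‖ = 1) :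
    ∃ c : ℂ, ‖c‖ = 1 ∧ angle x (c • y) = buresAngle x y := by
  obtain ⟨c, hc, hxy⟩ := Complex.exists_norm_eq_mul_self ⟪x, y⟫_ℂ
  refine ⟨c, hc, ?_⟩
  rw [angle, norm_smul, hc, hx, hy, one_mul, mul_one, div_one, real_inner_eq_re_inner ℂ,
    inner_smul_right, ← hxy]
  exact congrArg arccos (Complex.ofReal_re _)

lemma buresAngle_le_buresAngle_add_buresAngle {x y z : E} (hx : ‖x‖ = 1) (hy : ‖y‖ = 1)
    (hz : ‖z‖ = 1) : buresAngle x z ≤ buresAngle x y + buresAngle y z := by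
  obtain ⟨u, hu, hxy⟩ := exists_angle_smul_right_eq_buresAngle hx hy
  have huy : ‖u • y‖ = 1 := by rw [norm_smul, hu, hy, one_mul]
  obtain ⟨v, hv, hyz⟩ := exists_angle_smul_right_eq_buresAngle huy hz
  have hvz : ‖v • z‖ = 1 := by rw [norm_smul, hv, hz, one_mul]
  calc buresAngle x z = buresAngle x (v • z) := (buresAngle_smul_right hv x z).symm
    _ ≤ angle x (v • z) := buresAngle_le_angle hx hvz
    _ ≤ angle x (u • y) + angle (u • y) (v • z) := angle_le_angle_add_angle _ _ _
    _ = buresAngle x y + buresAngle y z := by rw [hxy, hyz, buresAngle_smul_left hu]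

end RealAngle

end BuresAngle

lemma abs_sin_le_sin_of_abs_le {x y : ℝ} (hxy : |x| ≤ y) (hy : y ≤ π / 2) : |sin x| ≤ sin y := by
  rw [abs_sin_eq_sin_abs_of_abs_le_pi (by linarith [pi_pos])]
  exact sin_le_sin_of_le_of_le_pi_div_two (by linarith [abs_nonneg x, pi_pos]) hy hxy

lemma sin_sq_le_sin_min_pi_div_two_sq {δ R : ℝ} (hδR : |δ| ≤ R) (hδ : |δ| ≤ π / 2) :
    sin δ ^ 2 ≤ sin (min R (π / 2)) ^ 2 := by
  rw [← sq_abs]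
  gcongr
  exact abs_sin_le_sin_of_abs_le (le_min hδR hδ) (min_le_right _ _)

lemma abs_sin_two_mul_le_sin_two_mul_min_pi_div_four {δ R : ℝ} (hδR : |δ| ≤ R) :
    |sin (2 * δ)| ≤ sin (2 * min R (π / 4)) := by
  rcases le_total R (π / 4) with hR | hR
  · rw [min_eq_left hR]
    exact abs_sin_le_sin_of_abs_le (by rw [abs_mul, abs_two]; linarith) (by linarith)
  · rw [min_eq_right hR, show 2 * (π / 4) = π / 2 by ring, sin_pi_div_two]
    exact abs_sin_le_one _

lemma cos_add_sq_sub_cos_sq (α δ : ℝ) :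
    cos (α + δ) ^ 2 - cos α ^ 2
      = sin δ ^ 2 * (1 - 2 * cos α ^ 2) - sin (2 * δ) * (cos α * sin α) := by
  rw [cos_add, sin_two_mul]
  linear_combination cos α ^ 2 * sin_sq_add_cos_sq δ + sin δ ^ 2 * sin_sq_add_cos_sq α

lemma abs_cos_sq_sub_cos_sq_le {α γ R : ℝ} (hα : α ∈ Set.Icc 0 (π / 2))
    (hγ : γ ∈ Set.Icc 0 (π / 2)) (hγα : |γ - α| ≤ R) :
    |cos γ ^ 2 - cos α ^ 2|
      ≤ sin (min R (π / 2)) ^ 2 * |1 - 2 * cos α ^ 2|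
        + sin (2 * min R (π / 4)) * (cos α * sin α) := by
  obtain ⟨δ, rfl⟩ : ∃ δ, γ = α + δ := ⟨γ - α, by ring⟩
  rw [add_sub_cancel_left] at hγα
  have hδ : |δ| ≤ π / 2 := abs_le.2 ⟨by linarith [hγ.1, hα.2], by linarith [hγ.2, hα.1]⟩
  have hcs : 0 ≤ cos α * sin α := mul_nonneg
    (cos_nonneg_of_mem_Icc ⟨by linarith [hα.1, pi_pos], hα.2⟩)
    (sin_nonneg_of_nonneg_of_le_pi hα.1 (by linarith [hα.2, pi_pos]))
  rw [cos_add_sq_sub_cos_sq]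
  calc _ ≤ |sin δ ^ 2 * (1 - 2 * cos α ^ 2)| + |sin (2 * δ) * (cos α * sin α)| := abs_sub _ _
    _ = sin δ ^ 2 * |1 - 2 * cos α ^ 2| + |sin (2 * δ)| * (cos α * sin α) := by
      rw [abs_mul, abs_mul, abs_sq, abs_of_nonneg hcs]
    _ ≤ _ := by
      gcongr ?_ * _ + ?_ * _
      · exact sin_sq_le_sin_min_pi_div_two_sq hγα hδ
      · exact abs_sin_two_mul_le_sin_two_mul_min_pi_div_four hγα

theorem fidelity_diff_le_g_of_bound_general
    {E : Type*} [NormedAddCommGroup E] [InnerProductSpace ℂ E]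
    (Φ₀ Ψ Φ : E) (hΦ₀ : ‖Φ₀‖ = 1) (hΨ : ‖Ψ‖ = 1) (hΦ : ‖Φ‖ = 1)
    (C : ℝ) (hC : C = ‖⟪Φ₀, Φ⟫_ℂ‖ ^ 2)
    (R : ℝ) (hRle : Real.arccos ‖⟪Φ₀, Ψ⟫_ℂ‖ ≤ R) :
    |‖⟪Φ, Ψ⟫_ℂ‖ ^ 2 - C|
      ≤ Real.sin (min R (π / 2)) ^ 2 * |1 - 2 * C|
        + Real.sin (2 * min R (π / 4)) * Real.sqrt C * Real.sqrt (1 - C) := by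
  have hθR : buresAngle Φ₀ Ψ ≤ R := hRle
  have hγ := buresAngle_le_buresAngle_add_buresAngle hΨ hΦ₀ hΦ
  have hα := buresAngle_le_buresAngle_add_buresAngle hΦ₀ hΨ hΦ
  rw [buresAngle_comm Ψ Φ₀] at hγ
  have key := abs_cos_sq_sub_cos_sq_le (R := R)
    ⟨buresAngle_nonneg Φ₀ Φ, buresAngle_le_pi_div_two Φ₀ Φ⟩
    ⟨buresAngle_nonneg Ψ Φ, buresAngle_le_pi_div_two Ψ Φ⟩
    (abs_sub_le_iff.2 ⟨by linarith, by linarith⟩)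
  rw [cos_buresAngle hΨ hΦ, cos_buresAngle hΦ₀ hΦ, sin_buresAngle, norm_inner_symm Ψ Φ] at key
  subst hC
  rw [sqrt_sq (norm_nonneg _)]
  linarith

/-- Second improved inequality: for unit vectors `Φ₀, Ψ, Φ`,
`C = |⟨Φ₀, Φ⟩|²`, and `R ≥ 0` with `arccos |⟨Φ₀, Ψ⟩| ≤ R`, one has
`| |⟨Φ, Ψ⟩|² - C | ≤ sin²(min R (π/2)) |1 - 2C| + sin(2 min R (π/4)) √C √(1-C)`. -/
theorem fidelity_diff_le_g_of_bound
    {E : Type*} [NormedAddCommGroup E] [InnerProductSpace ℂ E]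
    (Φ₀ Ψ Φ : E) (hΦ₀ : ‖Φ₀‖ = 1) (hΨ : ‖Ψ‖ = 1) (hΦ : ‖Φ‖ = 1)
    (C : ℝ) (hC : C = ‖⟪Φ₀, Φ⟫_ℂ‖ ^ 2)
    (R : ℝ) (hR : 0 ≤ R) (hRle : Real.arccos ‖⟪Φ₀, Ψ⟫_ℂ‖ ≤ R) :
    |‖⟪Φ, Ψ⟫_ℂ‖ ^ 2 - C|
      ≤ Real.sin (min R (π / 2)) ^ 2 * |1 - 2 * C|
        + Real.sin (2 * min R (π / 4)) * Real.sqrt C * Real.sqrt (1 - C) :=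
  fidelity_diff_le_g_of_bound_general Φ₀ Ψ Φ hΦ₀ hΨ hΦ C hC R hRle
end

section
/- Let H be a self-adjoint bounded operator on a complex Hilbert space E and let ψ₀, ψ be unit vectors. Set F = |⟨ψ₀, ψ⟩|² and ΔE₀ = √(‖Hψ₀‖² − (Re⟨ψ₀, Hψ₀⟩)²). Then |Re( i·⟨ψ, Hψ₀⟩·⟨ψ₀, ψ⟩ )| ≤ ΔE₀ · √(F·(1 − F)). -/
open scoped InnerProductSpace
open Real

/-!
Split `ψ = ⟪ψ₀, ψ⟫ ψ₀ + w` and `H ψ₀ = ⟪ψ₀, H ψ₀⟫ ψ₀ + v` with `w, v ⟂ ψ₀`. Then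
`⟪ψ, H ψ₀⟫ = ⟪w, v⟫ + conj ⟪ψ₀, ψ⟫ ⟪ψ₀, H ψ₀⟫`, and since `⟪ψ₀, H ψ₀⟫` is real the second term
contributes `i · (real) · |⟪ψ₀, ψ⟫|²`, which has no real part. What is left is bounded by
Cauchy–Schwarz, `‖v‖ ‖w‖ |⟪ψ₀, ψ⟫|`, and Pythagoras gives `‖v‖ = ΔE₀`, `‖w‖ = √(1 - F)`.
-/

section Decomposition

variable {𝕜 E : Type*} [RCLike 𝕜] [NormedAddCommGroup E] [InnerProductSpace 𝕜 E] {u : E}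

theorem inner_eq_inner_sub_inner_smul_add (hu : ‖u‖ = 1) (x y : E) :
    ⟪x, y⟫_𝕜 = ⟪x - ⟪u, x⟫_𝕜 • u, y - ⟪u, y⟫_𝕜 • u⟫_𝕜 + starRingEnd 𝕜 ⟪u, x⟫_𝕜 * ⟪u, y⟫_𝕜 := by
  simp only [inner_sub_left, inner_sub_right, inner_smul_left, inner_smul_right,
    inner_self_eq_one_of_norm_eq_one hu, inner_conj_symm]
  ring

theorem norm_sub_inner_smul_sq (hu : ‖u‖ = 1) (x : E) :
    ‖x - ⟪u, x⟫_𝕜 • u‖ ^ 2 = ‖x‖ ^ 2 - ‖⟪u, x⟫_𝕜‖ ^ 2 := by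
  have h := congrArg RCLike.re (inner_eq_inner_sub_inner_smul_add (𝕜 := 𝕜) hu x x)
  rw [RCLike.conj_mul, map_add, inner_self_eq_norm_sq, inner_self_eq_norm_sq] at h
  norm_cast at h
  linarith

theorem norm_sub_inner_smul_eq_sqrt (hu : ‖u‖ = 1) (x : E) :
    ‖x - ⟪u, x⟫_𝕜 • u‖ = √(‖x‖ ^ 2 - ‖⟪u, x⟫_𝕜‖ ^ 2) := by
  rw [← norm_sub_inner_smul_sq hu, Real.sqrt_sq (norm_nonneg _)]

end Decomposition

section Complex

variable {E : Type*} [NormedAddCommGroup E] [InnerProductSpace ℂ E]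

theorem abs_re_I_mul_inner_mul_inner_le {u x y : E} (hu : ‖u‖ = 1) (hy : (⟪u, y⟫_ℂ).im = 0) :
    |(Complex.I * ⟪x, y⟫_ℂ * ⟪u, x⟫_ℂ).re|
      ≤ ‖y - ⟪u, y⟫_ℂ • u‖ * ‖x - ⟪u, x⟫_ℂ • u‖ * ‖⟪u, x⟫_ℂ‖ := by
  set c := ⟪u, x⟫_ℂ
  set w := x - c • u
  set v := y - ⟪u, y⟫_ℂ • u
  have hre : (Complex.I * ⟪x, y⟫_ℂ * c).re = (Complex.I * ⟪w, v⟫_ℂ * c).re := by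
    have hsplit : Complex.I * (⟪w, v⟫_ℂ + starRingEnd ℂ c * ⟪u, y⟫_ℂ) * c
        = Complex.I * ⟪w, v⟫_ℂ * c + Complex.I * ⟪u, y⟫_ℂ * (Complex.normSq c : ℂ) := by
      rw [Complex.normSq_eq_conj_mul_self]; ring
    have hvanish : (Complex.I * ⟪u, y⟫_ℂ * (Complex.normSq c : ℂ)).re = 0 := by
      simp [Complex.mul_re, hy]
    rw [inner_eq_inner_sub_inner_smul_add hu x y, hsplit, Complex.add_re, hvanish, add_zero]
  calc |(Complex.I * ⟪x, y⟫_ℂ * c).re|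
      = |(Complex.I * ⟪w, v⟫_ℂ * c).re| := by rw [hre]
    _ ≤ ‖Complex.I * ⟪w, v⟫_ℂ * c‖ := Complex.abs_re_le_norm _
    _ = ‖⟪w, v⟫_ℂ‖ * ‖c‖ := by simp
    _ ≤ ‖v‖ * ‖w‖ * ‖c‖ := by
        gcongr
        rw [mul_comm]
        exact norm_inner_le_norm _ _

end Complex

theorem re_bound_uncertainty_general
    {E : Type*} [NormedAddCommGroup E] [InnerProductSpace ℂ E]
    (H : E →L[ℂ] E) (hH : ∀ x y : E, ⟪H x, y⟫_ℂ = ⟪x, H y⟫_ℂ)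
    (ψ₀ ψ : E) (hψ₀ : ‖ψ₀‖ = 1) (hψ : ‖ψ‖ = 1)
    (F ΔE₀ : ℝ) (hF : F = ‖⟪ψ₀, ψ⟫_ℂ‖ ^ 2)
    (hΔ : ΔE₀ = Real.sqrt (‖H ψ₀‖ ^ 2 - ((⟪ψ₀, H ψ₀⟫_ℂ).re) ^ 2)) :
    |(Complex.I * ⟪ψ, H ψ₀⟫_ℂ * ⟪ψ₀, ψ⟫_ℂ).re| ≤ ΔE₀ * Real.sqrt (F * (1 - F)) := by
  have hreal : (⟪ψ₀, H ψ₀⟫_ℂ).im = 0 :=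
    LinearMap.IsSymmetric.im_inner_self_apply (T := (H : E →ₗ[ℂ] E)) hH ψ₀
  have hv : ‖H ψ₀ - ⟪ψ₀, H ψ₀⟫_ℂ • ψ₀‖ = ΔE₀ := by
    rw [hΔ, norm_sub_inner_smul_eq_sqrt hψ₀, Complex.sq_norm, Complex.normSq_apply, hreal]
    congr 1
    ring
  have hw : ‖ψ - ⟪ψ₀, ψ⟫_ℂ • ψ₀‖ = Real.sqrt (1 - F) := by
    rw [norm_sub_inner_smul_eq_sqrt hψ₀, hψ, hF, one_pow]
  have hc : ‖⟪ψ₀, ψ⟫_ℂ‖ = Real.sqrt F := by rw [hF, Real.sqrt_sq (norm_nonneg _)]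
  calc |(Complex.I * ⟪ψ, H ψ₀⟫_ℂ * ⟪ψ₀, ψ⟫_ℂ).re|
      ≤ ΔE₀ * Real.sqrt (1 - F) * Real.sqrt F := by
        rw [← hv, ← hw, ← hc]; exact abs_re_I_mul_inner_mul_inner_le hψ₀ hreal
    _ = ΔE₀ * Real.sqrt (F * (1 - F)) := by
        rw [Real.sqrt_mul (by rw [hF]; positivity)]; ring

/-- Key estimate for the quantum speed limit: for a
self-adjoint bounded operator `H` and unit vectors `ψ₀, ψ`, with
`F = |⟨ψ₀, ψ⟩|²` and `ΔE₀ = √(‖Hψ₀‖² - (Re⟨ψ₀, Hψ₀⟩)²)`, one has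
`|Re(i ⟨ψ, Hψ₀⟩ ⟨ψ₀, ψ⟩)| ≤ ΔE₀ √(F(1-F))`. -/
theorem re_bound_uncertainty
    {E : Type*} [NormedAddCommGroup E] [InnerProductSpace ℂ E] [CompleteSpace E]
    (H : E →L[ℂ] E) (hH : ∀ x y : E, ⟪H x, y⟫_ℂ = ⟪x, H y⟫_ℂ)
    (ψ₀ ψ : E) (hψ₀ : ‖ψ₀‖ = 1) (hψ : ‖ψ‖ = 1)
    (F ΔE₀ : ℝ) (hF : F = ‖⟪ψ₀, ψ⟫_ℂ‖ ^ 2)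
    (hΔ : ΔE₀ = Real.sqrt (‖H ψ₀‖ ^ 2 - ((⟪ψ₀, H ψ₀⟫_ℂ).re) ^ 2)) :
    |(Complex.I * ⟪ψ, H ψ₀⟫_ℂ * ⟪ψ₀, ψ⟫_ℂ).re| ≤ ΔE₀ * Real.sqrt (F * (1 - F)) :=
  re_bound_uncertainty_general H hH ψ₀ ψ hψ₀ hψ F ΔE₀ hF hΔ
end
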